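/- For every natural number k ≥ 1 and every real number c ≥ 0, the integral of e^{−cξ}·ξ^{k/2}/(1+e^{ξ}) over ξ from 0 to ∞ equals Γ(1+k/2)·[2^{−k/2}·ζ(1+k/2, (c+1)/2) − ζ(1+k/2, c+1)], where ζ(s, q) denotes the Hurwitz zeta function. -/

import Mathlib

/-- The Hurwitz zeta function for real s > 1 and q > 0, defined by its series
ζ(s, q) = Σ_{n=0}^∞ (n+q)^{−s}. -/
noncomputable def hurwitzZetaReal (s q : ℝ) : ℝ := ∑' n : ℕ, 1 / ((n : ℝ) + q) ^ s

/-!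
For `ξ > 0` the geometric series gives `e^{-cξ} / (1 + e^ξ) = ∑ₙ (-1)ⁿ e^{-(n + c + 1)ξ}`.
The Dirichlet series `∑ₙ (n + c + 1)^{-(1 + p)}` converges absolutely, so the Mellin transform may
be taken termwise (`hasSum_mellin`): the integral equals `Γ(1 + p) ∑ₙ (-1)ⁿ (n + c + 1)^{-(1 + p)}`.
Splitting the alternating series into even and odd terms, it equals `2 E - ζ(1 + p, c + 1)`,
where the even part is `E = 2^{-(1+p)} ζ(1 + p, (c + 1)/2)`.
-/

open MeasureTheory Real Set

lemma summable_one_div_nat_add_rpow_of_nonneg {s q : ℝ} (hs : 1 < s) (hq : 0 ≤ q) :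
    Summable fun n : ℕ ↦ 1 / ((n : ℝ) + q) ^ s :=
  ((Real.summable_one_div_nat_add_rpow q s).2 hs).congr fun n ↦ by
    rw [abs_of_nonneg (by positivity)]

lemma hasSum_hurwitzZetaReal {s q : ℝ} (hs : 1 < s) (hq : 0 ≤ q) :
    HasSum (fun n : ℕ ↦ 1 / ((n : ℝ) + q) ^ s) (hurwitzZetaReal s q) :=
  (summable_one_div_nat_add_rpow_of_nonneg hs hq).hasSum

lemma hasSum_one_div_two_mul_add_rpow {s q : ℝ} (hs : 1 < s) (hq : 0 ≤ q) :
    HasSum (fun n : ℕ ↦ 1 / (2 * (n : ℝ) + q) ^ s)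
      (2 ^ (-s) * hurwitzZetaReal s (q / 2)) := by
  refine ((hasSum_hurwitzZetaReal hs (by positivity)).mul_left _).congr_fun fun n ↦ ?_
  rw [show 2 * (n : ℝ) + q = 2 * (n + q / 2) by ring, mul_rpow zero_le_two (by positivity),
    rpow_neg zero_le_two, ← one_div, one_div_mul_one_div]

lemma hasSum_neg_one_pow_div_nat_add_rpow {s q : ℝ} (hs : 1 < s) (hq : 0 ≤ q) :
    HasSum (fun n : ℕ ↦ (-1) ^ n / ((n : ℝ) + q) ^ s)
      (2 ^ (1 - s) * hurwitzZetaReal s (q / 2) - hurwitzZetaReal s q) := by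
  set f : ℕ → ℝ := fun n ↦ 1 / ((n : ℝ) + q) ^ s
  have h_even : HasSum (fun n ↦ f (2 * n)) (2 ^ (-s) * hurwitzZetaReal s (q / 2)) := by
    simpa [f] using hasSum_one_div_two_mul_add_rpow hs hq
  obtain ⟨odd, h_odd⟩ : Summable fun n ↦ f (2 * n + 1) :=
    (summable_one_div_nat_add_rpow_of_nonneg hs hq).comp_injective fun m n h ↦ by omega
  have h_split : hurwitzZetaReal s q = 2 ^ (-s) * hurwitzZetaReal s (q / 2) + odd :=
    (hasSum_hurwitzZetaReal hs hq).unique (h_even.even_add_odd h_odd)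
  have h_two : (2 : ℝ) ^ (1 - s) = 2 * 2 ^ (-s) := by
    rw [sub_eq_add_neg, rpow_add two_pos, rpow_one]
  have h_alt := HasSum.even_add_odd (f := fun n : ℕ ↦ (-1) ^ n / ((n : ℝ) + q) ^ s)
    (h_even.congr_fun fun n ↦ by simp [f, pow_mul])
    (h_odd.neg.congr_fun fun n ↦ by simp [f, pow_succ, pow_mul, neg_div])
  convert h_alt using 1
  rw [h_split, h_two]
  ring

lemma hasSum_neg_one_pow_mul_exp {ξ : ℝ} (hξ : 0 < ξ) (c : ℝ) :
    HasSum (fun n : ℕ ↦ (-1) ^ n * exp (-(n + (c + 1)) * ξ)) (exp (-c * ξ) / (1 + exp ξ)) := by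
  have hr : |-exp (-ξ)| < 1 := by
    rw [abs_neg, abs_of_pos (exp_pos _), Real.exp_lt_one_iff]; linarith
  have h_value : exp (-c * ξ) / (1 + exp ξ) = exp (-(c + 1) * ξ) * (1 - -exp (-ξ))⁻¹ := by
    rw [sub_neg_eq_add, ← div_eq_mul_inv, div_eq_div_iff (by positivity) (by positivity),
      mul_add, mul_add, ← exp_add, ← exp_add, mul_one, mul_one]
    ring_nf
  rw [h_value]
  refine ((hasSum_geometric_of_abs_lt_one hr).mul_left _).congr_fun fun n ↦ ?_
  rw [neg_pow (exp (-ξ)), ← exp_nat_mul, mul_left_comm, ← exp_add]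
  ring_nf

lemma hasSum_integral_rpow_mul_of_hasSum_exp {ι : Type*} [Countable ι] {a r : ι → ℝ}
    {F : ℝ → ℝ} {p : ℝ} (hr : ∀ i, 0 < r i) (hp : -1 < p)
    (hF : ∀ t ∈ Ioi 0, HasSum (fun i ↦ a i * exp (-r i * t)) (F t))
    (h_sum : Summable fun i ↦ |a i| / r i ^ (1 + p)) :
    HasSum (fun i ↦ Gamma (1 + p) * a i / r i ^ (1 + p)) (∫ t in Ioi 0, t ^ p * F t) := by
  have hF_complex : ∀ t ∈ Ioi 0, HasSum (fun i ↦ (a i : ℂ) * rexp (-r i * t)) (F t : ℂ) :=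
    fun t ht ↦ by exact_mod_cast hF t ht
  have h_mellin_real : mellin (fun t ↦ (F t : ℂ)) ((1 + p : ℝ) : ℂ) =
      ((∫ t in Ioi 0, t ^ p * F t : ℝ) : ℂ) := by
    rw [mellin, ← integral_complex_ofReal]
    refine setIntegral_congr_fun measurableSet_Ioi fun t ht ↦ ?_
    rw [smul_eq_mul, Complex.ofReal_mul, Complex.ofReal_cpow (le_of_lt ht), Complex.ofReal_add,
      Complex.ofReal_one, add_sub_cancel_left]
  have h := hasSum_mellin (s := ((1 + p : ℝ) : ℂ)) (fun i ↦ Or.inr (hr i))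
    (by rw [Complex.ofReal_re]; linarith) hF_complex (by simpa using h_sum)
  rw [h_mellin_real] at h
  refine Complex.hasSum_ofReal.mp (h.congr_fun fun i ↦ ?_)
  rw [Complex.ofReal_div, Complex.ofReal_mul, Complex.Gamma_ofReal, Complex.ofReal_cpow (hr i).le]

theorem integral_exp_mul_rpow_div_one_add_exp {p c : ℝ} (hp : 0 < p) (hc : -1 < c) :
    ∫ ξ in Ioi 0, exp (-c * ξ) * ξ ^ p / (1 + exp ξ) =
      Gamma (1 + p) * (2 ^ (-p) * hurwitzZetaReal (1 + p) ((c + 1) / 2) -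
        hurwitzZetaReal (1 + p) (c + 1)) := by
  have hq : 0 < c + 1 := by linarith
  have hs : 1 < 1 + p := by linarith
  have h_mellin := hasSum_integral_rpow_mul_of_hasSum_exp (a := fun n : ℕ ↦ (-1) ^ n) (p := p)
    (fun n ↦ by positivity) (by linarith) (fun ξ hξ ↦ hasSum_neg_one_pow_mul_exp hξ c)
    (by simpa using summable_one_div_nat_add_rpow_of_nonneg hs hq.le)
  have h_alt := (hasSum_neg_one_pow_div_nat_add_rpow hs hq.le).mul_left (Gamma (1 + p))
  simp only [← mul_div_assoc] at h_alt
  rw [sub_add_cancel_left] at h_alt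
  rw [h_alt.unique h_mellin]
  refine setIntegral_congr_fun measurableSet_Ioi fun ξ _ ↦ ?_
  ring

/-- for natural k ≥ 1 and real c ≥ 0,
∫_0^∞ e^{−cξ}·ξ^{k/2}/(1+e^ξ) dξ
  = Γ(1+k/2)·[2^{−k/2}·ζ(1+k/2,(c+1)/2) − ζ(1+k/2,c+1)]. -/
theorem fermiDirac_general_exp_hurwitz (k : ℕ) (hk : 1 ≤ k) (c : ℝ) (hc : 0 ≤ c) :
    (∫ ξ in Set.Ioi (0 : ℝ), Real.exp (-c * ξ) * ξ ^ ((k : ℝ) / 2) / (1 + Real.exp ξ)) =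
      Real.Gamma (1 + (k : ℝ) / 2) *
        ((2 : ℝ) ^ (-(k : ℝ) / 2) * hurwitzZetaReal (1 + (k : ℝ) / 2) ((c + 1) / 2) -
          hurwitzZetaReal (1 + (k : ℝ) / 2) (c + 1)) := by
  rw [neg_div]
  exact integral_exp_mul_rpow_div_one_add_exp (div_pos (Nat.cast_pos.mpr hk) two_pos)
    (by linarith)
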